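/- Suppose α = (m/n)π for positive integers m, n (with α ∈ (0,π/6)), let θ ∈ (0,π) be such that θ/π is irrational, and let s ∈ [0,2π). Let ν be the Markov path measure on C(θ)^ℕ with initial distribution δ_θ and transition kernel K(θ',·) = Σ_{i=1}^4 p_i(θ') δ_{T_i(θ')}. Then for ν-almost every sequence of angles (θ_k)_{k≥1}, the corresponding trajectory of the random billiard map in the circle is dense in the boundary: the sequence of collision points (s + 2Σ_{k=1}^n θ_k mod 2π)_{n≥1} is dense in [0,2π). -/

import Mathlib

open Real MeasureTheory Set Filter Topology
open scoped ENNReal NNReal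

noncomputable section

namespace RandomBilliard

/-- The four maps `T_1, …, T_4` of the Feres random map
(index `i : Fin 4` stands for `T_{i+1}`). -/
def T (α : ℝ) : Fin 4 → ℝ → ℝ
  | 0 => fun θ => θ + 2 * α
  | 1 => fun θ => -θ + 2 * π - 4 * α
  | 2 => fun θ => θ - 2 * α
  | 3 => fun θ => -θ + 4 * α

/-- `u_a(θ) = (1/2)(1 + tan a / tan θ)`. -/
def u (a θ : ℝ) : ℝ := 1 / 2 * (1 + Real.tan a / Real.tan θ)

/-- The probabilities `p_1, …, p_4` of the Feres random map
(index `i : Fin 4` stands for `p_{i+1}`). -/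
def p (α : ℝ) : Fin 4 → ℝ → ℝ
  | 0 => fun θ =>
      if θ < α then 1
      else if θ < π - 3 * α then u α θ
      else if θ < π - 2 * α then 2 * Real.cos (2 * α) * u (2 * α) θ
      else 0
  | 1 => fun θ =>
      if θ < π - 3 * α then 0
      else if θ < π - 2 * α then u α θ - 2 * Real.cos (2 * α) * u (2 * α) θ
      else if θ < π - α then u α θ
      else 0
  | 2 => fun θ =>
      if θ < 2 * α then 0
      else if θ < 3 * α then 2 * Real.cos (2 * α) * u (2 * α) (-θ)
      else if θ < π - α then u α (-θ)
      else 1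
  | 3 => fun θ =>
      if θ < α then 0
      else if θ < 2 * α then u α (-θ)
      else if θ < 3 * α then u α (-θ) - 2 * Real.cos (2 * α) * u (2 * α) (-θ)
      else 0

/-- `iterT α x k θ = T_x^{(k)}(θ) = T_{x_k} ∘ ⋯ ∘ T_{x_1}(θ)`
(the term `x j : Fin 4` stands for the symbol `x_{j+1}`). -/
def iterT (α : ℝ) (x : ℕ → Fin 4) : ℕ → ℝ → ℝ
  | 0 => fun θ => θ
  | k + 1 => fun θ => T α (x k) (iterT α x k θ)

/-- `Σ_θ`: the admissible symbol sequences for `θ`, i.e. those whose every finite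
prefix has positive probability. -/
def SigmaTheta (α θ : ℝ) : Set (ℕ → Fin 4) :=
  {x | ∀ k : ℕ, 0 < ∏ j ∈ Finset.range k, p α (x j) (iterT α x j θ)}

/-- `C(θ)`: all possible future images of `θ` under the Feres random map. -/
def Cset (α θ : ℝ) : Set ℝ :=
  {θ' | θ' ∈ Set.Ioo 0 π ∧
    ∃ (x : ℕ → Fin 4) (k : ℕ), x ∈ SigmaTheta α θ ∧ iterT α x k θ = θ'}

/-- The probability measure `μ(A) = (1/2) ∫_A sin θ dθ` on `[0, π]`. -/
def mu0 : Measure ℝ :=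
  (volume.restrict (Set.Icc 0 π)).withDensity fun θ => ENNReal.ofReal (1 / 2 * Real.sin θ)

/-- One step of the evolution of a measure under the Feres random map:
`(stepMeasure α ν)(A) = ∫ K(θ, A) dν(θ)`, where `K(θ, A) = Σ_i p_i(θ) 1_A(T_i θ)`. -/
def stepMeasure (α : ℝ) (ν : Measure ℝ) : Measure ℝ :=
  ∑ i : Fin 4, Measure.map (T α i) (ν.withDensity fun θ => ENNReal.ofReal (p α i θ))

/-- One step of the evolution of a measure under the random billiard map in the circle
`F̄(s, θ) = (s + 2 T_i(θ) mod 2π, T_i(θ))` with probability `p_i(θ)`. -/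
def circleStep (α : ℝ) (ν : Measure (ℝ × ℝ)) : Measure (ℝ × ℝ) :=
  ∑ i : Fin 4,
    Measure.map
      (fun q : ℝ × ℝ => (toIcoMod Real.two_pi_pos 0 (q.1 + 2 * T α i q.2), T α i q.2))
      (ν.withDensity fun q => ENNReal.ofReal (p α i q.2))

/-- The transition kernel `K(θ', ·) = Σ_i p_i(θ') δ_{T_i(θ')}` of the Feres random map. -/
def feresKernel (α : ℝ) (t : ℝ) : Measure ℝ :=
  ∑ i : Fin 4, ENNReal.ofReal (p α i t) • Measure.dirac (T α i t)

/-- `k`-step iterates of a transition kernel. -/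
def kerIterate (κ : ℝ → Measure ℝ) : ℕ → ℝ → Measure ℝ
  | 0 => fun t => Measure.dirac t
  | k + 1 => fun t => (κ t).bind (kerIterate κ k)

/-- The probability that a Markov chain with kernel `κ` started at `t` satisfies
`θ_0 ∈ B 0, …, θ_n ∈ B n`. -/
def cylProb (κ : ℝ → Measure ℝ) : ℕ → (ℕ → Set ℝ) → ℝ → ℝ≥0∞
  | 0 => fun B t => Set.indicator (B 0) (fun _ => (1 : ℝ≥0∞)) t
  | n + 1 => fun B t =>
      Set.indicator (B 0)
        (fun _ => ∫⁻ t', cylProb κ n (fun k => B (k + 1)) t' ∂(κ t)) t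

/-- `ν` is the Markov path measure on `ℕ → ℝ` (given by the Ionescu–Tulcea construction)
with initial distribution `ρ` and transition kernel `κ`, characterized by its values
on cylinder sets. -/
def IsMarkovPathMeasure (κ : ℝ → Measure ℝ) (ρ : Measure ℝ) (ν : Measure (ℕ → ℝ)) : Prop :=
  ∀ (n : ℕ) (B : ℕ → Set ℝ), (∀ k, MeasurableSet (B k)) →
    ν {ω | ∀ k ≤ n, ω k ∈ B k} = ∫⁻ t, cylProb κ n B t ∂ρ

/-- The shift map on sequences. -/
def shift : (ℕ → ℝ) → ℕ → ℝ := fun ω n => ω (n + 1)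

/-- Aperiodicity of the Markov chain with kernel `κ` on the state space `S`:
for every state, every common divisor of the return times having positive
probability equals `1` (i.e. every state has period 1). -/
def AperiodicChain (κ : ℝ → Measure ℝ) (S : Set ℝ) : Prop :=
  ∀ t ∈ S, ∀ d : ℕ, (∀ k : ℕ, 1 ≤ k → 0 < kerIterate κ k t {t} → d ∣ k) → d = 1

end RandomBilliard

/-!
Since `α/π = m/n`, each `T_i` maps the angles `±θ + kπ/n` to angles of the same form, so the
chain started at `θ` lives on a finite set `S` of angles, all irrational multiples of `π`. From `a ∈ S` the loop
`a → a ± 2α → a` has positive probability and moves the collision point by `4a ± 4α`, an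
irrational multiple of `2π`; by minimality of irrational rotations and compactness of the circle,
repeating it hits a given arc within a number of loops bounded independently of `a` and of the
current collision point. So within every block of `L` steps the arc is hit with probability at
least `δ > 0`, avoiding it forever has probability `0`, and intersecting over rational arcs gives
density.
-/

theorem exists_forall_exists_le_add_nsmul_mem {G : Type*} [AddGroup G] [TopologicalSpace G]
    [ContinuousAdd G] [CompactSpace G] {γ : G} (hγ : DenseRange (· • γ : ℕ → G)) {V : Set G}
    (hV : IsOpen V) (hVne : V.Nonempty) : ∃ R : ℕ, ∀ y : G, ∃ r ≤ R, y + r • γ ∈ V := by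
  obtain ⟨t, ht⟩ := isCompact_univ.elim_finite_subcover (fun r : ℕ => (· + r • γ) ⁻¹' V)
    (fun r => hV.preimage (continuous_add_const _)) fun y _ => by
      obtain ⟨v, hv⟩ := hVne
      obtain ⟨r, hr⟩ := hγ.exists_mem_open (hV.preimage (continuous_const_add y))
        ⟨-y + v, by simpa [← add_assoc] using hv⟩
      exact mem_iUnion.2 ⟨r, hr⟩
  refine ⟨t.sup id, fun y => ?_⟩
  obtain ⟨r, hr, hy⟩ := mem_iUnion₂.1 (ht (mem_univ y))
  exact ⟨r, Finset.le_sup (f := id) hr, hy⟩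

theorem AddCircle.coe_mem_image_Ioo_iff {p : ℝ} [Fact (0 < p)] {q₁ q₂ : ℝ} (h₁ : 0 ≤ q₁)
    (h₂ : q₂ ≤ p) (x : ℝ) :
    (x : AddCircle p) ∈ ((↑) : ℝ → AddCircle p) '' Ioo q₁ q₂ ↔
      toIcoMod (Fact.out : 0 < p) 0 x ∈ Ioo q₁ q₂ := by
  constructor
  · rintro ⟨t, ht, hxt⟩
    have h := congrArg (fun z => (AddCircle.equivIco p 0 z : ℝ)) hxt
    rw [AddCircle.equivIco_coe_of_mem ⟨h₁.trans ht.1.le, by linarith [ht.2]⟩] at h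
    rwa [h] at ht
  · exact fun hx => ⟨_, hx, AddCircle.coe_equivIco (a := 0) (y := (x : AddCircle p))⟩

theorem exists_forall_exists_le_toIcoMod_add_mem {p γ : ℝ} (hp : 0 < p) (hγ : Irrational (γ / p))
    {q₁ q₂ : ℝ} (h₁ : 0 ≤ q₁) (h₁₂ : q₁ < q₂) (h₂ : q₂ ≤ p) :
    ∃ R : ℕ, ∀ y : ℝ, ∃ r ≤ R, toIcoMod hp 0 (y + r * γ) ∈ Ioo q₁ q₂ := by
  have : Fact (0 < p) := ⟨hp⟩
  have hdense : DenseRange (· • (γ : AddCircle p) : ℕ → AddCircle p) :=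
    denseRange_zsmul_iff_nsmul.1 (AddCircle.denseRange_zsmul_coe_iff.2 hγ)
  obtain ⟨R, hR⟩ := exists_forall_exists_le_add_nsmul_mem hdense
    (QuotientAddGroup.isOpenMap_coe _ isOpen_Ioo) ((nonempty_Ioo.2 h₁₂).image _)
  refine ⟨R, fun y => ?_⟩
  obtain ⟨r, hr, hy⟩ := hR y
  refine ⟨r, hr, (AddCircle.coe_mem_image_Ioo_iff h₁ h₂ _).1 ?_⟩
  rwa [AddCircle.coe_add, ← nsmul_eq_mul, AddCircle.coe_nsmul]

theorem Ico_subset_closure_range_of_forall_rat {ι : Type*} {a b : ℝ} {f : ι → ℝ}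
    (h : ∀ q₁ q₂ : ℚ, a ≤ q₁ → q₁ < q₂ → (q₂ : ℝ) ≤ b → ∃ i, f i ∈ Ioo (q₁ : ℝ) q₂) :
    Ico a b ⊆ closure (range f) := by
  intro y ⟨hay, hyb⟩
  rw [Metric.mem_closure_iff]
  intro ε hε
  obtain ⟨q₁, hyq₁, hq₁⟩ := exists_rat_btwn (lt_min (lt_add_of_pos_right y hε) hyb)
  obtain ⟨q₂, hq₁₂, hq₂⟩ := exists_rat_btwn hq₁
  obtain ⟨i, hi₁, hi₂⟩ := h q₁ q₂ (hay.trans hyq₁.le) (by exact_mod_cast hq₁₂)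
    (hq₂.le.trans (min_le_right _ _))
  refine ⟨f i, mem_range_self i, ?_⟩
  rw [Real.dist_eq, abs_lt]
  constructor <;> linarith [min_le_left (y + ε) b]

namespace RandomBilliard

section Probabilities

theorem u_eq_sin_div {a t : ℝ} (ha : cos a ≠ 0) (ht : sin t ≠ 0) :
    u a t = sin (t + a) / (2 * sin t * cos a) := by
  rw [u, tan_eq_sin_div_cos, tan_eq_sin_div_cos, div_div_eq_mul_div, sin_add]
  field_simp

theorem u_neg_eq_sin_div {a t : ℝ} (ha : cos a ≠ 0) (ht : sin t ≠ 0) :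
    u a (-t) = sin (t - a) / (2 * sin t * cos a) := by
  rw [u_eq_sin_div ha (by rwa [sin_neg, neg_ne_zero]), sin_neg, mul_neg, neg_mul,
    div_neg, ← neg_div, ← sin_neg, neg_add, neg_neg, ← sub_eq_add_neg]

theorem u_sub_two_cos_mul_u {a t : ℝ} (ha : cos a ≠ 0) (h2a : cos (2 * a) ≠ 0) (ht : sin t ≠ 0) :
    u a t - 2 * cos (2 * a) * u (2 * a) t = -sin (t + 3 * a) / (2 * sin t * cos a) := by
  have h₁ := sin_add (t + 2 * a) a
  have h₂ := sin_sub (t + 2 * a) a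
  rw [show t + 2 * a + a = t + 3 * a by ring, show t + 2 * a - a = t + a by ring] at *
  have h₃ : 2 * cos (2 * a) * u (2 * a) t = sin (t + 2 * a) / sin t := by
    rw [u_eq_sin_div h2a ht]
    field_simp
  rw [h₃, u_eq_sin_div ha ht]
  generalize sin (t + a) = A, sin (t + 2 * a) = B, sin (t + 3 * a) = C at *
  field_simp
  linear_combination h₁ + h₂

theorem u_neg_sub_two_cos_mul_u_neg {a t : ℝ} (ha : cos a ≠ 0) (h2a : cos (2 * a) ≠ 0)
    (ht : sin t ≠ 0) :
    u a (-t) - 2 * cos (2 * a) * u (2 * a) (-t) = sin (3 * a - t) / (2 * sin t * cos a) := by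
  rw [u_sub_two_cos_mul_u ha h2a (by rwa [sin_neg, neg_ne_zero]), sin_neg,
    show -t + 3 * a = 3 * a - t by ring]
  ring

theorem u_add_u_neg (a t : ℝ) : u a t + u a (-t) = 1 := by
  simp only [u, tan_neg, div_neg]
  ring

variable {α t : ℝ}

theorem cos_pos_of_mem_Ioo_zero {a : ℝ} (ha : a ∈ Ioo 0 (π / 2)) : 0 < cos a :=
  cos_pos_of_mem_Ioo ⟨by linarith [ha.1, pi_pos], ha.2⟩

theorem sin_mul_cos_pos {a : ℝ} (ha : a ∈ Ioo 0 (π / 2)) (ht : t ∈ Ioo 0 π) :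
    0 < 2 * sin t * cos a :=
  mul_pos (mul_pos two_pos (sin_pos_of_pos_of_lt_pi ht.1 ht.2)) (cos_pos_of_mem_Ioo_zero ha)

theorem u_nonneg {a : ℝ} (ha : a ∈ Ioo 0 (π / 2)) (ht : t ∈ Ioo 0 π) (h : t + a ≤ π) :
    0 ≤ u a t := by
  rw [u_eq_sin_div (cos_pos_of_mem_Ioo_zero ha).ne' (sin_pos_of_pos_of_lt_pi ht.1 ht.2).ne']
  exact div_nonneg (sin_nonneg_of_nonneg_of_le_pi (by linarith [ha.1, ht.1]) h)
    (sin_mul_cos_pos ha ht).le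

theorem u_pos {a : ℝ} (ha : a ∈ Ioo 0 (π / 2)) (ht : t ∈ Ioo 0 π) (h : t + a < π) :
    0 < u a t := by
  rw [u_eq_sin_div (cos_pos_of_mem_Ioo_zero ha).ne' (sin_pos_of_pos_of_lt_pi ht.1 ht.2).ne']
  exact div_pos (sin_pos_of_pos_of_lt_pi (by linarith [ha.1, ht.1]) h) (sin_mul_cos_pos ha ht)

theorem u_neg_nonneg {a : ℝ} (ha : a ∈ Ioo 0 (π / 2)) (ht : t ∈ Ioo 0 π) (h : a ≤ t) :
    0 ≤ u a (-t) := by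
  rw [u_neg_eq_sin_div (cos_pos_of_mem_Ioo_zero ha).ne' (sin_pos_of_pos_of_lt_pi ht.1 ht.2).ne']
  exact div_nonneg (sin_nonneg_of_nonneg_of_le_pi (by linarith) (by linarith [ha.1, ht.2]))
    (sin_mul_cos_pos ha ht).le

theorem u_neg_pos {a : ℝ} (ha : a ∈ Ioo 0 (π / 2)) (ht : t ∈ Ioo 0 π) (h : a < t) :
    0 < u a (-t) := by
  rw [u_neg_eq_sin_div (cos_pos_of_mem_Ioo_zero ha).ne' (sin_pos_of_pos_of_lt_pi ht.1 ht.2).ne']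
  exact div_pos (sin_pos_of_pos_of_lt_pi (by linarith) (by linarith [ha.1, ht.2]))
    (sin_mul_cos_pos ha ht)

theorem p_nonneg (hα : α ∈ Ioo 0 (π / 6)) (ht : t ∈ Ioo 0 π) (i : Fin 4) : 0 ≤ p α i t := by
  obtain ⟨hα₀, hα₆⟩ := hα
  have h₁ : α ∈ Ioo 0 (π / 2) := ⟨hα₀, by linarith⟩
  have h₂ : 2 * α ∈ Ioo 0 (π / 2) := ⟨by linarith, by linarith⟩
  have hcos₁ := (cos_pos_of_mem_Ioo_zero h₁).ne'
  have hcos₂ := cos_pos_of_mem_Ioo_zero h₂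
  have hsin : sin t ≠ 0 := (sin_pos_of_pos_of_lt_pi ht.1 ht.2).ne'
  have hd := (sin_mul_cos_pos h₁ ht).le
  fin_cases i <;> simp only [p] <;> split_ifs <;> first
    | exact le_rfl
    | exact zero_le_one
    | exact u_nonneg h₁ ht (by linarith)
    | exact u_neg_nonneg h₁ ht (by linarith)
    | exact mul_nonneg (by positivity) (u_nonneg h₂ ht (by linarith))
    | exact mul_nonneg (by positivity) (u_neg_nonneg h₂ ht (by linarith))
    | rw [u_sub_two_cos_mul_u hcos₁ hcos₂.ne' hsin, ← sin_sub_pi]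
      exact div_nonneg (sin_nonneg_of_nonneg_of_le_pi (by linarith) (by linarith)) hd
    | rw [u_neg_sub_two_cos_mul_u_neg hcos₁ hcos₂.ne' hsin]
      exact div_nonneg (sin_nonneg_of_nonneg_of_le_pi (by linarith) (by linarith)) hd

theorem sum_p (hα : α ∈ Ioo 0 (π / 6)) (t : ℝ) : ∑ i, p α i t = 1 := by
  obtain ⟨hα₀, hα₆⟩ := hα
  have h₁ := u_add_u_neg α t
  have h₂ := u_add_u_neg (2 * α) t
  simp only [Fin.sum_univ_four, p]
  split_ifs <;> linarith

theorem p_zero_pos (hα : α ∈ Ioo 0 (π / 6)) (ht : t ∈ Ioo 0 (π - 2 * α)) : 0 < p α 0 t := by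
  obtain ⟨hα₀, hα₆⟩ := hα
  have ht' : t ∈ Ioo 0 π := ⟨ht.1, by linarith [ht.2]⟩
  have hcos₂ := cos_pos_of_mem_Ioo_zero (a := 2 * α) ⟨by linarith, by linarith⟩
  simp only [p]
  split_ifs
  · exact one_pos
  · exact u_pos ⟨hα₀, by linarith⟩ ht' (by linarith)
  · exact mul_pos (by positivity) (u_pos ⟨by linarith, by linarith⟩ ht' (by linarith [ht.2]))
  · linarith [ht.2]

theorem p_two_pos (hα : α ∈ Ioo 0 (π / 6)) (ht : t ∈ Ioo (2 * α) π) : 0 < p α 2 t := by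
  obtain ⟨hα₀, hα₆⟩ := hα
  have ht' : t ∈ Ioo 0 π := ⟨by linarith [ht.1], ht.2⟩
  have hcos₂ := cos_pos_of_mem_Ioo_zero (a := 2 * α) ⟨by linarith, by linarith⟩
  simp only [p]
  split_ifs
  · linarith [ht.1]
  · exact mul_pos (by positivity) (u_neg_pos ⟨by linarith, by linarith⟩ ht' ht.1)
  · exact u_neg_pos ⟨hα₀, by linarith⟩ ht' (by linarith)
  · exact one_pos

theorem T_mem_Ioo (hα : α ∈ Ioo 0 (π / 6)) (ht : t ∈ Ioo 0 π) {i : Fin 4} (hp : 0 < p α i t) :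
    T α i t ∈ Ioo 0 π := by
  obtain ⟨hα₀, hα₆⟩ := hα
  obtain ⟨ht₀, htπ⟩ := ht
  fin_cases i <;> simp only [p] at hp <;> simp only [T, mem_Ioo] <;> split_ifs at hp <;>
    try (constructor <;> linarith)
  -- `p₃` vanishes at `t = 2α`, where `T₃` would leave `(0, π)`
  rename_i h₂α _
  have hne : 2 * α ≠ t := by
    rintro rfl
    have hcos := (cos_pos_of_mem_Ioo_zero (a := 2 * α) ⟨by linarith, by linarith⟩).ne'
    rw [u_neg_eq_sin_div hcos (sin_pos_of_pos_of_lt_pi ht₀ htπ).ne', sub_self, sin_zero] at hp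
    simp at hp
  constructor <;> [exact sub_pos.2 (lt_of_le_of_ne (not_lt.1 h₂α) hne); linarith]

end Probabilities

section MarkovPath

variable (κ : ℝ → Measure ℝ)

def pathWeight : ℝ → List ℝ → ℝ≥0∞
  | _, [] => 1
  | a, b :: l => κ a {b} * pathWeight b l

theorem cylProb_singleton_getD :
    ∀ (l : List ℝ) (a t : ℝ), cylProb κ l.length (fun k => {(a :: l).getD k 0}) t =
      ({a} : Set ℝ).indicator (fun _ => pathWeight κ a l) t
  | [], a, t => rfl
  | b :: l, a, t => by
    simp only [List.length_cons, cylProb, List.getD_cons_succ, List.getD_cons_zero,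
      cylProb_singleton_getD l b, lintegral_indicator_const (measurableSet_singleton b)]
    by_cases h : t = a
    · simp [h, pathWeight, mul_comm]
    · simp [h]

theorem cylProb_const_of_absorbing {S : Set ℝ} (hSm : MeasurableSet S) (hS : ∀ a ∈ S, κ a S = 1)
    (n : ℕ) (t : ℝ) : cylProb κ n (fun _ => S) t = S.indicator 1 t := by
  induction n generalizing t with
  | zero => rfl
  | succ n ih =>
    simp only [cylProb, ih, lintegral_indicator_one hSm]
    by_cases ht : t ∈ S
    · simp [ht, hS t ht]
    · simp [ht]

namespace IsMarkovPathMeasure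

variable {κ} {θ : ℝ} {ν : Measure (ℕ → ℝ)} (hν : IsMarkovPathMeasure κ (Measure.dirac θ) ν)
include hν

theorem measure_cylinder (l : List ℝ) :
    ν {ω | ∀ k ≤ l.length, ω k = (θ :: l).getD k 0} = pathWeight κ θ l := by
  have h := hν l.length (fun k => {(θ :: l).getD k 0}) fun _ => measurableSet_singleton _
  rwa [lintegral_dirac, cylProb_singleton_getD, indicator_of_mem (mem_singleton θ)] at h

theorem isProbabilityMeasure : IsProbabilityMeasure ν :=
  ⟨by simpa [cylProb] using hν 0 (fun _ => univ) fun _ => .univ⟩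

theorem ae_forall_le_mem {n : ℕ} {B : ℕ → Set ℝ} (hB : ∀ k, MeasurableSet (B k))
    (h : cylProb κ n B θ = 1) : ∀ᵐ ω ∂ν, ∀ k ≤ n, ω k ∈ B k := by
  have := hν.isProbabilityMeasure
  have hmeas : MeasurableSet {ω : ℕ → ℝ | ∀ k ≤ n, ω k ∈ B k} := by
    simp only [ofPred_forall]
    exact .iInter fun k => .iInter fun _ => measurable_pi_apply k (hB k)
  rw [ae_iff_measure_eq hmeas.nullMeasurableSet, hν n B hB, lintegral_dirac, h, measure_univ]

theorem ae_apply_zero : ∀ᵐ ω ∂ν, ω 0 = θ := by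
  filter_upwards [hν.ae_forall_le_mem (n := 0) (B := fun _ => {θ})
    (fun _ => measurableSet_singleton θ) (by simp [cylProb])] with ω hω
  exact hω 0 le_rfl

theorem ae_forall_mem_of_absorbing {S : Set ℝ} (hSm : MeasurableSet S)
    (hS : ∀ a ∈ S, κ a S = 1) (hθ : θ ∈ S) : ∀ᵐ ω ∂ν, ∀ k, ω k ∈ S := by
  have h n := hν.ae_forall_le_mem (n := n) (fun _ => hSm)
    (by rw [cylProb_const_of_absorbing κ hSm hS, indicator_of_mem hθ, Pi.one_apply])
  filter_upwards [ae_all_iff.2 h] with ω hω k using hω k k le_rfl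

end IsMarkovPathMeasure

end MarkovPath

section Words

def words (S : Finset ℝ) : ℕ → Finset (List ℝ)
  | 0 => {[]}
  | M + 1 => S.biUnion fun b => (words S M).image (b :: ·)

variable {S : Finset ℝ}

theorem mem_words {M : ℕ} {l : List ℝ} : l ∈ words S M ↔ l.length = M ∧ ∀ b ∈ l, b ∈ S := by
  induction M generalizing l with
  | zero => simp +contextual [words]
  | succ M ih => cases l <;> simp [words, ih, and_comm, and_left_comm]

theorem sum_words_succ {β : Type*} [AddCommMonoid β] (f : List ℝ → β) (M : ℕ) :
    ∑ l ∈ words S (M + 1), f l = ∑ b ∈ S, ∑ l ∈ words S M, f (b :: l) := by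
  rw [words, Finset.sum_biUnion]
  · exact Finset.sum_congr rfl fun b _ =>
      Finset.sum_image fun _ _ _ _ => List.cons_injective.eq_iff.1
  · intro b _ b' _ hne
    simp only [Function.onFun, Finset.disjoint_left, Finset.mem_image]
    rintro _ ⟨l, -, rfl⟩ ⟨l', -, h⟩
    exact hne (List.cons_eq_cons.1 h).1.symm

end Words

section Avoidance

variable (κ : ℝ → Measure ℝ) (S : Finset ℝ) (g : ℝ → ℝ) (U : Set ℝ)

-- The starting phase `x` itself is not tested.
def PhaseAvoids : ℝ → List ℝ → Prop
  | _, [] => True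
  | x, b :: l => x + g b ∉ U ∧ PhaseAvoids (x + g b) l

theorem not_phaseAvoids_of_add_sum_mem {x : ℝ} {v : List ℝ} (hv : v ≠ [])
    (h : x + (v.map g).sum ∈ U) : ¬PhaseAvoids g U x v := by
  induction v generalizing x with
  | nil => exact absurd rfl hv
  | cons b l ih =>
    rintro ⟨hb, hl⟩
    rcases eq_or_ne l [] with rfl | hl'
    · simp_all
    · exact ih hl' (by simpa [add_assoc] using h) hl

theorem phaseAvoids_map_range (f : ℕ → ℝ) (M : ℕ) (x : ℝ) :
    PhaseAvoids g U x ((List.range M).map f) ↔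
      ∀ j < M, x + ∑ k ∈ Finset.range (j + 1), g (f k) ∉ U := by
  induction M generalizing x f with
  | zero => simp [PhaseAvoids]
  | succ M ih =>
    simp only [List.range_succ_eq_map, List.map_cons, List.map_map, PhaseAvoids, ih,
      Nat.forall_lt_succ_left, Finset.sum_range_succ' _ (_ + 1), Function.comp_def]
    simp [add_comm, add_assoc]

open Classical in
def avoidMass (a x : ℝ) (M : ℕ) : ℝ≥0∞ :=
  ∑ l ∈ words S M, if PhaseAvoids g U x l then pathWeight κ a l else 0

variable {κ S g U}

theorem avoidMass_zero (a x : ℝ) : avoidMass κ S g U a x 0 = 1 := by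
  simp [avoidMass, words, PhaseAvoids, pathWeight]

theorem avoidMass_succ (a x : ℝ) (M : ℕ) :
    avoidMass κ S g U a x (M + 1) =
      ∑ b ∈ S, κ a {b} * Uᶜ.indicator (fun y => avoidMass κ S g U b y M) (x + g b) := by
  rw [avoidMass, sum_words_succ]
  refine Finset.sum_congr rfl fun b _ => ?_
  by_cases hb : x + g b ∈ U
  · simp [hb, PhaseAvoids]
  · rw [indicator_of_mem hb, avoidMass, Finset.mul_sum]
    refine Finset.sum_congr rfl fun l _ => ?_
    simp only [PhaseAvoids, pathWeight, mul_ite, mul_zero]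
    split_ifs <;> simp_all

theorem sum_pathWeight_le_one (hS : ∀ a ∈ S, κ a S ≤ 1) (M : ℕ) {a : ℝ} (ha : a ∈ S) :
    ∑ l ∈ words S M, pathWeight κ a l ≤ 1 := by
  induction M generalizing a with
  | zero => simp [words, pathWeight]
  | succ M ih =>
    calc ∑ l ∈ words S (M + 1), pathWeight κ a l
        = ∑ b ∈ S, κ a {b} * ∑ l ∈ words S M, pathWeight κ b l := by
          simp only [sum_words_succ, pathWeight, Finset.mul_sum]
      _ ≤ ∑ b ∈ S, κ a {b} := Finset.sum_le_sum fun b hb => mul_le_of_le_one_right' (ih hb)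
      _ ≤ 1 := by rw [sum_measure_singleton]; exact hS a ha

theorem avoidMass_le_one (hS : ∀ a ∈ S, κ a S ≤ 1) {a : ℝ} (ha : a ∈ S) (x : ℝ) (M : ℕ) :
    avoidMass κ S g U a x M ≤ 1 :=
  (Finset.sum_le_sum fun _ _ => by split_ifs <;> simp).trans (sum_pathWeight_le_one hS M ha)

-- The Markov property at time `L`.
theorem avoidMass_add_le {M : ℕ} {c : ℝ≥0∞} (hM : ∀ b ∈ S, ∀ y, avoidMass κ S g U b y M ≤ c)
    (L : ℕ) {a : ℝ} (ha : a ∈ S) (x : ℝ) :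
    avoidMass κ S g U a x (L + M) ≤ avoidMass κ S g U a x L * c := by
  induction L generalizing a x with
  | zero => rw [zero_add, avoidMass_zero, one_mul]; exact hM a ha x
  | succ L ih =>
    rw [show L + 1 + M = L + M + 1 by omega, avoidMass_succ, avoidMass_succ, Finset.sum_mul]
    refine Finset.sum_le_sum fun b hb => ?_
    rw [mul_assoc]
    refine mul_le_mul_right ?_ _
    by_cases hy : x + g b ∈ U
    · simp [hy]
    · simpa [hy] using ih hb (x + g b)

theorem avoidMass_antitone (hS : ∀ a ∈ S, κ a S ≤ 1) {M L : ℕ} (hML : M ≤ L) {a : ℝ} (ha : a ∈ S)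
    (x : ℝ) : avoidMass κ S g U a x L ≤ avoidMass κ S g U a x M := by
  obtain ⟨K, rfl⟩ := Nat.exists_eq_add_of_le hML
  simpa using avoidMass_add_le (fun b hb y => avoidMass_le_one hS hb y K) M ha x

theorem avoidMass_mul_le_pow {L : ℕ} {c : ℝ≥0∞} (hL : ∀ a ∈ S, ∀ x, avoidMass κ S g U a x L ≤ c)
    (k : ℕ) {a : ℝ} (ha : a ∈ S) (x : ℝ) : avoidMass κ S g U a x (k * L) ≤ c ^ k := by
  induction k generalizing a x with
  | zero => simp [avoidMass_zero]
  | succ k ih =>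
    calc avoidMass κ S g U a x ((k + 1) * L)
        ≤ avoidMass κ S g U a x L * c ^ k := by
          rw [add_mul, one_mul, add_comm]; exact avoidMass_add_le (fun b hb y => ih hb y) L ha x
      _ ≤ c ^ (k + 1) := by rw [pow_succ']; exact mul_le_mul_left (hL a ha x) _

theorem avoidMass_le_one_sub (hS : ∀ a ∈ S, κ a S ≤ 1) {M : ℕ} {a : ℝ} (ha : a ∈ S) {x : ℝ}
    {v : List ℝ} (hv : v ∈ words S M) (hav : ¬PhaseAvoids g U x v) :
    avoidMass κ S g U a x M ≤ 1 - pathWeight κ a v := by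
  classical
  have h : avoidMass κ S g U a x M + pathWeight κ a v ≤ 1 := by
    refine le_trans ?_ (sum_pathWeight_le_one hS M ha)
    rw [avoidMass, ← Finset.sum_filter,
      ← Finset.sum_filter_add_sum_filter_not (words S M) (PhaseAvoids g U x)]
    exact add_le_add_right (Finset.single_le_sum (fun _ _ => zero_le)
      (Finset.mem_filter.2 ⟨hv, hav⟩)) _
  exact ENNReal.le_sub_of_add_le_right ((le_add_self.trans h).trans_lt ENNReal.one_lt_top).ne h

variable (κ) in
theorem exists_pos_le_pathWeight (S : Finset ℝ) (L : ℕ) :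
    ∃ δ > 0, ∀ a ∈ S, ∀ v : List ℝ, v.length ≤ L → (∀ b ∈ v, b ∈ S) →
      0 < pathWeight κ a v → δ ≤ pathWeight κ a v := by
  classical
  let P := (S ×ˢ (Finset.range (L + 1)).biUnion (words S)).filter
    fun q => 0 < pathWeight κ q.1 q.2
  refine ⟨P.inf fun q => pathWeight κ q.1 q.2, ?_, fun a ha v hvL hvS hpos => ?_⟩
  · exact (Finset.lt_inf_iff ENNReal.zero_lt_top).2 fun q hq => (Finset.mem_filter.1 hq).2
  · refine Finset.inf_le (f := fun q => pathWeight κ q.1 q.2) (b := (a, v)) ?_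
    simp only [P, Finset.mem_filter, Finset.mem_product, Finset.mem_biUnion, Finset.mem_range,
      mem_words]
    exact ⟨⟨ha, v.length, by omega, rfl, hvS⟩, hpos⟩

end Avoidance

namespace IsMarkovPathMeasure

variable {κ : ℝ → Measure ℝ} {θ : ℝ} {ν : Measure (ℕ → ℝ)}
  (hν : IsMarkovPathMeasure κ (Measure.dirac θ) ν) {S : Finset ℝ} {g : ℝ → ℝ} {U : Set ℝ}
include hν

theorem measure_phaseAvoids_le_avoidMass (M : ℕ) (x : ℝ) :
    ν {ω | ω 0 = θ ∧ (∀ k, ω k ∈ S) ∧ ∀ j, x + ∑ k ∈ Finset.range (j + 1), g (ω (k + 1)) ∉ U}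
      ≤ avoidMass κ S g U θ x M := by
  classical
  let W := (words S M).filter (PhaseAvoids g U x)
  calc _ ≤ ν (⋃ l ∈ W, {ω | ∀ k ≤ l.length, ω k = (θ :: l).getD k 0}) := measure_mono ?_
    _ ≤ ∑ l ∈ W, ν {ω | ∀ k ≤ l.length, ω k = (θ :: l).getD k 0} :=
      measure_biUnion_finset_le _ _
    _ = avoidMass κ S g U θ x M := by
      rw [avoidMass, ← Finset.sum_filter]
      exact Finset.sum_congr rfl fun l _ => hν.measure_cylinder l
  rintro ω ⟨h0, hS, hU⟩
  refine mem_biUnion (x := (List.range M).map fun k => ω (k + 1)) ?_ fun k hk => ?_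
  · simp only [W, Finset.coe_filter, mem_ofPred_eq, mem_words, List.length_map,
      List.length_range, List.mem_map, List.mem_range, phaseAvoids_map_range]
    exact ⟨⟨trivial, by rintro _ ⟨k, -, rfl⟩; exact hS _⟩, fun j _ => hU j⟩
  · cases k with
    | zero => simpa using h0
    | succ k => simp_all [List.getD_eq_getElem?_getD]

theorem ae_exists_add_sum_mem (hθ : θ ∈ S) (hS : ∀ a ∈ S, κ a S = 1) {L : ℕ}
    (hhit : ∀ a ∈ S, ∀ x, ∃ v : List ℝ, v ≠ [] ∧ v.length ≤ L ∧ (∀ b ∈ v, b ∈ S) ∧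
      0 < pathWeight κ a v ∧ x + (v.map g).sum ∈ U) (x : ℝ) :
    ∀ᵐ ω ∂ν, ∃ j, x + ∑ k ∈ Finset.range (j + 1), g (ω (k + 1)) ∈ U := by
  obtain ⟨δ, hδ, hδle⟩ := exists_pos_le_pathWeight κ S L
  have hS' : ∀ a ∈ S, κ a S ≤ 1 := fun a ha => (hS a ha).le
  have hstep : ∀ a ∈ S, ∀ x, avoidMass κ S g U a x L ≤ 1 - δ := by
    intro a ha x
    obtain ⟨v, hv, hvL, hvS, hpos, hvU⟩ := hhit a ha x
    calc avoidMass κ S g U a x L ≤ avoidMass κ S g U a x v.length :=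
          avoidMass_antitone hS' hvL ha x
      _ ≤ 1 - pathWeight κ a v := avoidMass_le_one_sub hS' ha (mem_words.2 ⟨rfl, hvS⟩)
          (not_phaseAvoids_of_add_sum_mem g U hv hvU)
      _ ≤ 1 - δ := tsub_le_tsub_left (hδle a ha v hvL hvS hpos) 1
  have hδ' : 1 - δ < 1 := ENNReal.sub_lt_self ENNReal.one_ne_top one_ne_zero hδ.ne'
  have hnull : ν {ω | ω 0 = θ ∧ (∀ k, ω k ∈ S) ∧
      ∀ j, x + ∑ k ∈ Finset.range (j + 1), g (ω (k + 1)) ∉ U} = 0 :=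
    nonpos_iff_eq_zero.1 <| ge_of_tendsto' (ENNReal.tendsto_pow_atTop_nhds_zero_of_lt_one hδ')
      fun k => (hν.measure_phaseAvoids_le_avoidMass (k * L) x).trans
        (avoidMass_mul_le_pow hstep k hθ x)
  filter_upwards [hν.ae_apply_zero, hν.ae_forall_mem_of_absorbing S.measurableSet hS hθ,
    measure_eq_zero_iff_ae_notMem.1 hnull] with ω h0 hωS hω
  by_contra h
  exact hω ⟨h0, hωS, fun j hj => h ⟨j, hj⟩⟩

end IsMarkovPathMeasure

section FeresChain

theorem feresKernel_apply (α t : ℝ) (B : Set ℝ) :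
    feresKernel α t B = ∑ i, ENNReal.ofReal (p α i t) * B.indicator 1 (T α i t) := by
  simp [feresKernel, Measure.dirac_apply]

theorem feresKernel_pos_of_p_pos {α t : ℝ} {i : Fin 4} (hp : 0 < p α i t) :
    0 < feresKernel α t {T α i t} := by
  rw [feresKernel_apply]
  refine lt_of_lt_of_le ?_ (Finset.single_le_sum (fun j _ => zero_le) (Finset.mem_univ i))
  simpa using hp

theorem feresKernel_eq_one_of_invariant {α : ℝ} (hα : α ∈ Ioo 0 (π / 6)) {S : Set ℝ}
    (hSI : ∀ b ∈ S, b ∈ Ioo 0 π) (hSc : ∀ b ∈ S, ∀ i, 0 < p α i b → T α i b ∈ S) {a : ℝ} (ha : a ∈ S) :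
    feresKernel α a S = 1 := by
  have hterm (i : Fin 4) :
      ENNReal.ofReal (p α i a) * S.indicator 1 (T α i a) = ENNReal.ofReal (p α i a) := by
    rcases lt_or_ge 0 (p α i a) with h | h
    · simp [hSc a ha i h]
    · simp [ENNReal.ofReal_eq_zero.2 h]
  rw [feresKernel_apply, Finset.sum_congr rfl fun i _ => hterm i,
    ← ENNReal.ofReal_sum_of_nonneg fun i _ => p_nonneg hα (hSI a ha) i, sum_p hα, ENNReal.ofReal_one]

theorem exists_zigzag_step {α : ℝ} (hα : α ∈ Ioo 0 (π / 6)) {S : Set ℝ}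
    (hSI : ∀ b ∈ S, b ∈ Ioo 0 π) (hSc : ∀ b ∈ S, ∀ i, 0 < p α i b → T α i b ∈ S) {a : ℝ} (ha : a ∈ S) :
    ∃ d, (d = 2 * α ∨ d = -(2 * α)) ∧ a + d ∈ S ∧
      0 < feresKernel α a {a + d} ∧ 0 < feresKernel α (a + d) {a} := by
  obtain ⟨hα₀, hα₆⟩ := hα
  obtain ⟨ha₀, haπ⟩ := hSI a ha
  rcases lt_or_ge a (π - 2 * α) with h | h
  · have hp₀ : 0 < p α 0 a := p_zero_pos ⟨hα₀, hα₆⟩ ⟨ha₀, h⟩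
    have hp₂ : 0 < p α 2 (a + 2 * α) := p_two_pos ⟨hα₀, hα₆⟩ ⟨by linarith, by linarith⟩
    have hT : T α 2 (a + 2 * α) = a := by simp [T]
    refine ⟨2 * α, .inl rfl, ?_, ?_, ?_⟩
    · simpa [T] using hSc a ha 0 hp₀
    · simpa [T] using feresKernel_pos_of_p_pos hp₀
    · simpa [hT] using feresKernel_pos_of_p_pos hp₂
  · have hp₂ : 0 < p α 2 a := p_two_pos ⟨hα₀, hα₆⟩ ⟨by linarith, haπ⟩
    have hp₀ : 0 < p α 0 (a - 2 * α) := p_zero_pos ⟨hα₀, hα₆⟩ ⟨by linarith, by linarith⟩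
    have hT : T α 0 (a - 2 * α) = a := by simp [T]
    refine ⟨-(2 * α), .inr rfl, ?_, ?_, ?_⟩
    · simpa [T, sub_eq_add_neg] using hSc a ha 2 hp₂
    · simpa [T, sub_eq_add_neg] using feresKernel_pos_of_p_pos hp₂
    · simpa [hT, ← sub_eq_add_neg] using feresKernel_pos_of_p_pos hp₀

end FeresChain

def zigzag (a d : ℝ) : ℕ → List ℝ
  | 0 => []
  | r + 1 => (a + d) :: a :: zigzag a d r

section Zigzag

variable (a d : ℝ)

theorem length_zigzag (r : ℕ) : (zigzag a d r).length = 2 * r := by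
  induction r with
  | zero => rfl
  | succ r ih => simp [zigzag, ih]; ring

theorem mem_zigzag {r : ℕ} {b : ℝ} (hb : b ∈ zigzag a d r) : b = a + d ∨ b = a := by
  induction r with
  | zero => simp [zigzag] at hb
  | succ r ih => simp only [zigzag, List.mem_cons] at hb; tauto

theorem sum_map_two_mul_zigzag (r : ℕ) :
    ((zigzag a d r).map (2 * ·)).sum = r * (4 * a + 2 * d) := by
  induction r with
  | zero => simp [zigzag]
  | succ r ih => simp only [zigzag, List.map_cons, List.sum_cons, ih]; push_cast; ring

theorem pathWeight_zigzag (κ : ℝ → Measure ℝ) (r : ℕ) :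
    pathWeight κ a (zigzag a d r) = (κ a {a + d} * κ (a + d) {a}) ^ r := by
  induction r with
  | zero => simp [zigzag, pathWeight]
  | succ r ih => simp only [zigzag, pathWeight, ih, pow_succ']; ring

end Zigzag

theorem exists_zigzag_hitting {α : ℝ} (hα : α ∈ Ioo 0 (π / 6)) {q : ℚ} (hq : α = q * π)
    {S : Finset ℝ} (hSI : ∀ b ∈ S, b ∈ Ioo 0 π) (hSc : ∀ b ∈ S, ∀ i, 0 < p α i b → T α i b ∈ S)
    (hSirr : ∀ b ∈ S, Irrational (b / π)) {q₁ q₂ : ℝ} (h₁ : 0 ≤ q₁) (h₁₂ : q₁ < q₂)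
    (h₂ : q₂ ≤ 2 * π) :
    ∃ L, ∀ a ∈ S, ∀ x, ∃ v : List ℝ, v ≠ [] ∧ v.length ≤ L ∧ (∀ b ∈ v, b ∈ S) ∧
      0 < pathWeight (feresKernel α) a v ∧
      x + (v.map (2 * ·)).sum ∈ {y | toIcoMod two_pi_pos 0 y ∈ Ioo q₁ q₂} := by
  have hrot (a) (ha : a ∈ S) : ∃ d, a + d ∈ S ∧ 0 < feresKernel α a {a + d} ∧
      0 < feresKernel α (a + d) {a} ∧ ∃ R : ℕ, ∀ y : ℝ, ∃ r ≤ R,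
        toIcoMod two_pi_pos 0 (y + r * (4 * a + 2 * d)) ∈ Ioo q₁ q₂ := by
    obtain ⟨d, hd, hdS, hpos⟩ := exists_zigzag_step hα hSI hSc ha
    refine ⟨d, hdS, hpos.1, hpos.2,
      exists_forall_exists_le_toIcoMod_add_mem two_pi_pos ?_ h₁ h₁₂ h₂⟩
    obtain ⟨ε, hε⟩ : ∃ ε : ℚ, d = ε * π := by
      rcases hd with rfl | rfl
      exacts [⟨2 * q, by rw [hq]; push_cast; ring⟩, ⟨-(2 * q), by rw [hq]; push_cast; ring⟩]
    have : (4 * a + 2 * d) / (2 * π) = 2 * (a / π) + (ε : ℝ) := by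
      rw [hε]; field_simp; ring
    rw [this]
    exact ((hSirr a ha).natCast_mul two_ne_zero).add_ratCast ε
  choose! d hdS hd₁ hd₂ R hR using hrot
  refine ⟨2 * (S.sup R + 1), fun a ha x => ?_⟩
  -- The rotation starts after one loop, since the initial point `x` is not a collision point.
  obtain ⟨r, hr, hrU⟩ := hR a ha (x + (4 * a + 2 * d a))
  have hRa : R a ≤ S.sup R := Finset.le_sup ha
  refine ⟨zigzag a (d a) (r + 1), by simp [zigzag], by rw [length_zigzag]; omega, ?_, ?_, ?_⟩
  · intro b hb
    rcases mem_zigzag _ _ hb with rfl | rfl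
    exacts [hdS a ha, ha]
  · rw [pathWeight_zigzag]
    exact ENNReal.pow_pos (ENNReal.mul_pos (hd₁ a ha).ne' (hd₂ a ha).ne') _
  · rw [mem_ofPred_eq, sum_map_two_mul_zigzag]
    convert hrU using 2
    push_cast
    ring

open AddSubgroup in
def gridOrbit (θ η : ℝ) : Set ℝ :=
  {b ∈ Ioo 0 π | b - θ ∈ zmultiples η ∨ b + θ ∈ zmultiples η}

section GridOrbit

open AddSubgroup

variable {θ η : ℝ}

theorem gridOrbit_finite (θ η : ℝ) : (gridOrbit θ η).Finite := by
  have hfin (c : ℝ) : ((zmultiples η : Set ℝ) ∩ Icc c (π + c)).Finite := by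
    rw [inter_comm]
    exact Metric.finite_isBounded_inter_isClosed
      (SetLike.isDiscrete_iff_discreteTopology.2 inferInstance) (Metric.isBounded_Icc _ _)
      (zmultiples η).isClosed_of_discrete
  refine (((hfin (-θ)).image (· + θ)).union ((hfin θ).image (· - θ))).subset ?_
  rintro b ⟨⟨hb₀, hbπ⟩, h | h⟩
  · exact .inl ⟨b - θ, ⟨h, by constructor <;> linarith⟩, sub_add_cancel b θ⟩
  · exact .inr ⟨b + θ, ⟨h, by constructor <;> linarith⟩, add_sub_cancel_right b θ⟩

theorem T_sub_or_add_mem_zmultiples {α : ℝ} (hα : 2 * α ∈ zmultiples η)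
    (hπ : 2 * π ∈ zmultiples η) (i : Fin 4) (b : ℝ) :
    T α i b - b ∈ zmultiples η ∨ T α i b + b ∈ zmultiples η := by
  fin_cases i
  · exact .inl (by simpa [T] using hα)
  · exact .inr (by convert sub_mem hπ (add_mem hα hα) using 1; simp [T]; ring)
  · exact .inl (by simpa [T] using neg_mem hα)
  · exact .inr (by convert add_mem hα hα using 1; simp [T]; ring)

theorem T_mem_gridOrbit {α : ℝ} (hα : α ∈ Ioo 0 (π / 6)) (h2α : 2 * α ∈ zmultiples η)
    (hπ : 2 * π ∈ zmultiples η) {b : ℝ} (hb : b ∈ gridOrbit θ η) {i : Fin 4}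
    (hp : 0 < p α i b) : T α i b ∈ gridOrbit θ η := by
  refine ⟨T_mem_Ioo hα hb.1 hp, ?_⟩
  rcases T_sub_or_add_mem_zmultiples h2α hπ i b with h | h <;> rcases hb.2 with h' | h'
  · exact .inl (by convert add_mem h h' using 1; ring)
  · exact .inr (by convert add_mem h h' using 1; ring)
  · exact .inr (by convert sub_mem h h' using 1; ring)
  · exact .inl (by convert sub_mem h h' using 1; ring)

theorem irrational_div_pi_of_mem_gridOrbit (hθ : Irrational (θ / π)) {q : ℚ} (hη : η = q * π)
    {b : ℝ} (hb : b ∈ gridOrbit θ η) : Irrational (b / π) := by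
  rcases hb.2 with h | h <;> obtain ⟨k, hk⟩ := mem_zmultiples_iff.1 h
  · have : b / π = θ / π + (k * q : ℚ) := by
      rw [eq_add_of_sub_eq hk.symm, hη]; push_cast; field_simp; ring
    exact this ▸ hθ.add_ratCast _
  · have : b / π = -(θ / π) + (k * q : ℚ) := by
      rw [eq_sub_of_add_eq hk.symm, hη]; push_cast; field_simp; ring
    exact this ▸ hθ.neg.add_ratCast _

end GridOrbit

theorem exists_finset_invariant_irrational {α : ℝ} (hα : α ∈ Ioo 0 (π / 6)) {m n : ℕ}
    (hn : 0 < n) (hrat : α = m / n * π) {θ : ℝ} (hθ : θ ∈ Ioo 0 π) (hirr : Irrational (θ / π)) :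
    ∃ S : Finset ℝ, θ ∈ S ∧ (∀ b ∈ S, b ∈ Ioo 0 π) ∧
      (∀ b ∈ S, ∀ i, 0 < p α i b → T α i b ∈ S) ∧ ∀ b ∈ S, Irrational (b / π) := by
  set η := ((n : ℚ)⁻¹ : ℚ) * π
  have h2α : 2 * α ∈ AddSubgroup.zmultiples η :=
    ⟨2 * m, by simp [η, hrat, div_eq_mul_inv]; ring⟩
  have hπ : 2 * π ∈ AddSubgroup.zmultiples η :=
    ⟨2 * n, by simp [η]; field_simp⟩
  refine ⟨(gridOrbit_finite θ η).toFinset, ?_, fun b hb => ?_, fun b hb i hp => ?_,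
    fun b hb => ?_⟩ <;> simp only [Finite.mem_toFinset] at *
  · exact ⟨hθ, .inl (by simp)⟩
  · exact hb.1
  · exact T_mem_gridOrbit hα h2α hπ hb hp
  · exact irrational_div_pi_of_mem_gridOrbit hirr rfl hb

end RandomBilliard

open RandomBilliard

theorem ae_dense_orbit_rational_general (α : ℝ) (hα : α ∈ Set.Ioo 0 (π / 6))
    (m n : ℕ) (hn : 0 < n) (hrat : α = (m : ℝ) / (n : ℝ) * π)
    (θ : ℝ) (hθ : θ ∈ Set.Ioo 0 π) (hirr : Irrational (θ / π))
    (s : ℝ)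
    (ν : Measure (ℕ → ℝ))
    (hν : IsMarkovPathMeasure (feresKernel α) (Measure.dirac θ) ν) :
    ∀ᵐ ω ∂ν, Set.Ico 0 (2 * π) ⊆ closure (Set.range fun j : ℕ =>
      toIcoMod Real.two_pi_pos 0 (s + 2 * ∑ k ∈ Finset.Icc 1 (j + 1), ω k)) := by
  obtain ⟨S, hθS, hSI, hSc, hSirr⟩ := exists_finset_invariant_irrational hα hn hrat hθ hirr
  have hκS (a) (ha : a ∈ S) : feresKernel α a S = 1 :=
    feresKernel_eq_one_of_invariant hα hSI hSc ha
  have hhit (q₁ q₂ : ℚ) (h₁ : 0 ≤ (q₁ : ℝ)) (h₁₂ : q₁ < q₂) (h₂ : (q₂ : ℝ) ≤ 2 * π) :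
      ∀ᵐ ω ∂ν, ∃ j, toIcoMod two_pi_pos 0 (s + 2 * ∑ k ∈ Finset.Icc 1 (j + 1), ω k) ∈
        Ioo (q₁ : ℝ) q₂ := by
    obtain ⟨L, hL⟩ := exists_zigzag_hitting hα (q := m / n) (by push_cast; exact hrat) hSI hSc
      hSirr h₁ (by exact_mod_cast h₁₂) h₂
    filter_upwards [hν.ae_exists_add_sum_mem hθS hκS hL s] with ω ⟨j, hj⟩
    refine ⟨j, ?_⟩
    rwa [Finset.range_eq_Ico, Finset.sum_Ico_add' (fun k => 2 * ω k), ← Finset.mul_sum] at hj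
  have hall : ∀ᵐ ω ∂ν, ∀ q₁ q₂ : ℚ, 0 ≤ (q₁ : ℝ) → q₁ < q₂ → (q₂ : ℝ) ≤ 2 * π → ∃ j,
      toIcoMod two_pi_pos 0 (s + 2 * ∑ k ∈ Finset.Icc 1 (j + 1), ω k) ∈ Ioo (q₁ : ℝ) q₂ := by
    simpa only [ae_all_iff, eventually_imp_distrib_left] using hhit
  filter_upwards [hall] with ω hω
  exact Ico_subset_closure_range_of_forall_rat hω

/-- if `α = (m/n)π` is rational and `θ/π` is irrational, then for
`ν`-almost every sequence of angles of the Markov chain started at `θ`, the collision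
points `s + 2Σ_{k=1}^n θ_k mod 2π` of the random billiard map in the circle are dense
in `[0, 2π)`. -/
theorem ae_dense_orbit_rational (α : ℝ) (hα : α ∈ Set.Ioo 0 (π / 6))
    (m n : ℕ) (hm : 0 < m) (hn : 0 < n) (hrat : α = (m : ℝ) / (n : ℝ) * π)
    (θ : ℝ) (hθ : θ ∈ Set.Ioo 0 π) (hirr : Irrational (θ / π))
    (s : ℝ) (hs : s ∈ Set.Ico 0 (2 * π))
    (ν : Measure (ℕ → ℝ))
    (hν : IsMarkovPathMeasure (feresKernel α) (Measure.dirac θ) ν) :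
    ∀ᵐ ω ∂ν, Set.Ico 0 (2 * π) ⊆ closure (Set.range fun j : ℕ =>
      toIcoMod Real.two_pi_pos 0 (s + 2 * ∑ k ∈ Finset.Icc 1 (j + 1), ω k)) :=
  ae_dense_orbit_rational_general α hα m n hn hrat θ hθ hirr s ν hν
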